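/- Let n ≥ 1, λ > 1, 0 < α < (n+2)/2·(1−1/λ), and T > 0. Then β := (n+2)/2 − λα/(λ−1) is positive, and the function f(x,t) := A·Φ_β(x, t+T)·χ_{[0,∞)}(t), where A := ((4π)^{(λ−1)n/2}·Γ(α+β)^λ / Γ(β))^{1/(λ−1)}, satisfies: f ∈ X^p for every p ∈ [1,∞), f ≥ (J_α f)^λ everywhere on ℝ^n×ℝ, f = 0 on ℝ^n×(−∞,0), and f is not zero a.e. -/

import Mathlib

open MeasureTheory Real Set
open scoped ENNReal

/-- The fractional heat kernel `Φ_α(x,t)`. -/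
noncomputable def Phi (n : ℕ) (α : ℝ) (x : EuclideanSpace ℝ (Fin n)) (t : ℝ) : ℝ :=
  if 0 < t then
    (t ^ (α - 1) / Real.Gamma α) * (4 * Real.pi * t) ^ (-(n : ℝ) / 2) *
      Real.exp (-‖x‖ ^ 2 / (4 * t))
  else 0

/-- `J_α f (x,t) = ∫_{-∞}^t ∫_{ℝ^n} Φ_α(x-ξ,t-τ) f(ξ,τ) dξ dτ`, as a value in `[0,∞]`. -/
noncomputable def J (n : ℕ) (α : ℝ) (f : EuclideanSpace ℝ (Fin n) → ℝ → ℝ)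
    (x : EuclideanSpace ℝ (Fin n)) (t : ℝ) : ℝ≥0∞ :=
  ∫⁻ τ in Set.Iio t, ∫⁻ ξ, ENNReal.ofReal (Phi n α (x - ξ) (t - τ) * f ξ τ)

/-- Membership in `X^p`: measurable with finite `L^p` norm on `ℝ^n × (-∞,T)` for all `T`. -/
def MemXp (n : ℕ) (p : ℝ≥0∞) (f : EuclideanSpace ℝ (Fin n) → ℝ → ℝ) : Prop :=
  Measurable (Function.uncurry f) ∧
  ∀ T : ℝ, eLpNorm (Function.uncurry f) p
    (volume.restrict {q : EuclideanSpace ℝ (Fin n) × ℝ | q.2 < T}) < ⊤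

/-!
The fractional heat kernels form a semigroup under space-time convolution,
`Φ_α ∗ Φ_β = Φ_{α+β}`: in space this is the Chapman–Kolmogorov identity for the Gaussian, in time
it is the Beta integral `∫₀ˢ (s-τ)^{α-1} τ^{β-1} dτ = s^{α+β-1} Γ(α)Γ(β)/Γ(α+β)`. Since
`f ≤ A Φ_β(·, · + T)`, this gives `J_α f(x,t) ≤ A Φ_{α+β}(x, t+T)`, and the choice of `β` and `A`
makes `(A Φ_{α+β})^λ ≤ A Φ_β`. On a slab `t < T'`, `f` is dominated by a Gaussian in `x` times the
indicator of a bounded time interval, which gives the `X^p` bounds.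
-/

section Gaussian

variable {V : Type*} [NormedAddCommGroup V] [InnerProductSpace ℝ V]

lemma exp_neg_norm_sub_sq_mul_exp_neg_norm_sq {u v : ℝ} (hu : 0 < u) (hv : 0 < v) (x ξ : V) :
    rexp (-‖x - ξ‖ ^ 2 / (4 * u)) * rexp (-‖ξ‖ ^ 2 / (4 * v))
      = rexp (-‖x‖ ^ 2 / (4 * (u + v)))
        * rexp (-((u + v) / (4 * u * v)) * ‖ξ - (v / (u + v)) • x‖ ^ 2) := by
  rw [← exp_add, ← exp_add, norm_sub_sq_real x ξ, norm_sub_sq_real, real_inner_smul_right,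
    norm_smul, mul_pow, Real.norm_eq_abs, sq_abs, real_inner_comm]
  congr 1
  field_simp
  ring

variable [FiniteDimensional ℝ V] [MeasurableSpace V] [BorelSpace V]

lemma integrable_exp_neg_mul_sq_norm {b : ℝ} (hb : 0 < b) :
    Integrable (fun v : V => rexp (-b * ‖v‖ ^ 2)) :=
  Integrable.of_integral_ne_zero <| by
    rw [GaussianFourier.integral_rexp_neg_mul_sq_norm hb]; positivity

lemma memLp_exp_neg_mul_sq_norm {b : ℝ} (hb : 0 < b) {p : ℝ≥0∞} (hp0 : p ≠ 0) (hp : p ≠ ∞) :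
    MemLp (fun v : V => rexp (-b * ‖v‖ ^ 2)) p := by
  refine (integrable_norm_rpow_iff (by fun_prop) hp0 hp).1 ?_
  have hp' : 0 < p.toReal := ENNReal.toReal_pos hp0 hp
  refine (integrable_exp_neg_mul_sq_norm (mul_pos hb hp')).congr (ae_of_all _ fun v => ?_)
  dsimp only
  rw [Real.norm_of_nonneg (exp_nonneg _), ← exp_mul]
  ring_nf

end Gaussian

noncomputable def heatKernel (n : ℕ) (x : EuclideanSpace ℝ (Fin n)) (t : ℝ) : ℝ :=
  (4 * π * t) ^ (-(n : ℝ) / 2) * rexp (-‖x‖ ^ 2 / (4 * t))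

section HeatKernel

variable {n : ℕ}

lemma heatKernel_pos {t : ℝ} (ht : 0 < t) (x : EuclideanSpace ℝ (Fin n)) :
    0 < heatKernel n x t := by
  unfold heatKernel; positivity

lemma heatKernel_mul_heatKernel {u v : ℝ} (hu : 0 < u) (hv : 0 < v)
    (x ξ : EuclideanSpace ℝ (Fin n)) :
    heatKernel n (x - ξ) u * heatKernel n ξ v
      = (4 * π * (u * v / (u + v))) ^ (-(n : ℝ) / 2) * heatKernel n x (u + v)
        * rexp (-((u + v) / (4 * u * v)) * ‖ξ - (v / (u + v)) • x‖ ^ 2) := by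
  have hpow : (4 * π * u) ^ (-(n : ℝ) / 2) * (4 * π * v) ^ (-(n : ℝ) / 2)
      = (4 * π * (u * v / (u + v))) ^ (-(n : ℝ) / 2) * (4 * π * (u + v)) ^ (-(n : ℝ) / 2) := by
    rw [← mul_rpow (by positivity) (by positivity), ← mul_rpow (by positivity) (by positivity)]
    congr 1
    field_simp
  unfold heatKernel
  calc _ = (4 * π * u) ^ (-(n : ℝ) / 2) * (4 * π * v) ^ (-(n : ℝ) / 2)
        * (rexp (-‖x - ξ‖ ^ 2 / (4 * u)) * rexp (-‖ξ‖ ^ 2 / (4 * v))) := by ring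
    _ = _ := by rw [hpow, exp_neg_norm_sub_sq_mul_exp_neg_norm_sq hu hv]; ring

lemma integrable_heatKernel_mul_heatKernel {u v : ℝ} (hu : 0 < u) (hv : 0 < v)
    (x : EuclideanSpace ℝ (Fin n)) :
    Integrable (fun ξ => heatKernel n (x - ξ) u * heatKernel n ξ v) := by
  simp_rw [heatKernel_mul_heatKernel hu hv]
  exact ((integrable_exp_neg_mul_sq_norm (by positivity)).comp_sub_right _).const_mul _

lemma integral_heatKernel_mul_heatKernel {u v : ℝ} (hu : 0 < u) (hv : 0 < v)
    (x : EuclideanSpace ℝ (Fin n)) :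
    ∫ ξ, heatKernel n (x - ξ) u * heatKernel n ξ v = heatKernel n x (u + v) := by
  simp_rw [heatKernel_mul_heatKernel hu hv]
  rw [integral_const_mul, integral_sub_right_eq_self
      (fun ξ => rexp (-((u + v) / (4 * u * v)) * ‖ξ‖ ^ 2)),
    GaussianFourier.integral_rexp_neg_mul_sq_norm (by positivity), finrank_euclideanSpace_fin,
    show π / ((u + v) / (4 * u * v)) = 4 * π * (u * v / (u + v)) by field_simp,
    neg_div, rpow_neg (by positivity)]
  field_simp

end HeatKernel

section Phi

variable {n : ℕ}

lemma Phi_of_pos {α t : ℝ} (ht : 0 < t) (x : EuclideanSpace ℝ (Fin n)) :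
    Phi n α x t = t ^ (α - 1) / Gamma α * heatKernel n x t := by
  rw [Phi, if_pos ht, heatKernel, mul_assoc]

lemma Phi_of_nonpos {α t : ℝ} (ht : t ≤ 0) (x : EuclideanSpace ℝ (Fin n)) : Phi n α x t = 0 :=
  if_neg ht.not_gt

lemma Phi_pos {α t : ℝ} (hα : 0 < α) (ht : 0 < t) (x : EuclideanSpace ℝ (Fin n)) :
    0 < Phi n α x t := by
  have := Gamma_pos_of_pos hα
  have := heatKernel_pos ht x
  rw [Phi_of_pos ht]
  positivity

lemma Phi_nonneg {α : ℝ} (hα : 0 < α) (x : EuclideanSpace ℝ (Fin n)) (t : ℝ) :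
    0 ≤ Phi n α x t := by
  rcases le_or_gt t 0 with ht | ht
  · rw [Phi_of_nonpos ht]
  · exact (Phi_pos hα ht x).le

lemma measurable_Phi (α : ℝ) :
    Measurable fun q : EuclideanSpace ℝ (Fin n) × ℝ => Phi n α q.1 q.2 :=
  Measurable.ite (measurableSet_lt measurable_const measurable_snd) (by fun_prop) measurable_const

lemma log_Phi {α t : ℝ} (hα : 0 < α) (ht : 0 < t) (x : EuclideanSpace ℝ (Fin n)) :
    log (Phi n α x t) = (α - 1) * log t - log (Gamma α)
      - n / 2 * (log (4 * π) + log t) - ‖x‖ ^ 2 / (4 * t) := by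
  have := Gamma_pos_of_pos hα
  rw [Phi_of_pos ht, heatKernel, log_mul (by positivity) (by positivity),
    log_div (by positivity) (by positivity), log_mul (by positivity) (by positivity),
    log_rpow ht, log_rpow (by positivity), log_exp, log_mul (by positivity) ht.ne']
  ring

end Phi

section Beta

lemma intervalIntegrable_rpow_mul_sub_rpow {a b s : ℝ} (ha : 0 < a) (hb : 0 < b) (hs : 0 < s) :
    IntervalIntegrable (fun τ => τ ^ (a - 1) * (s - τ) ^ (b - 1)) volume 0 s := by
  have hleft : IntervalIntegrable (fun τ => τ ^ (a - 1) * (s - τ) ^ (b - 1)) volume 0 (s / 2) := by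
    refine (intervalIntegral.intervalIntegrable_rpow' (by linarith)).mul_continuousOn
      (ContinuousOn.rpow_const (by fun_prop) fun τ hτ => Or.inl ?_)
    rw [uIcc_of_le (by linarith)] at hτ
    linarith [hτ.2]
  have hright : IntervalIntegrable (fun τ => τ ^ (a - 1) * (s - τ) ^ (b - 1)) volume (s / 2) s := by
    have h := ((intervalIntegral.intervalIntegrable_rpow' (r := b - 1) (a := 0) (b := s / 2)
      (by linarith)).comp_sub_left s).symm
    rw [sub_zero, sub_half] at h
    refine (h.mul_continuousOn (g := fun τ => τ ^ (a - 1))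
      (ContinuousOn.rpow_const (by fun_prop) fun τ hτ => Or.inl ?_)).congr
      fun τ _ => mul_comm _ _
    rw [uIcc_of_le (by linarith)] at hτ
    linarith [hτ.1]
  exact hleft.trans hright

lemma integral_rpow_mul_sub_rpow {a b s : ℝ} (ha : 0 < a) (hb : 0 < b) (hs : 0 < s) :
    ∫ τ in (0 : ℝ)..s, τ ^ (a - 1) * (s - τ) ^ (b - 1)
      = s ^ (a + b - 1) * (Gamma a * Gamma b / Gamma (a + b)) := by
  have h := Complex.betaIntegral_scaled a b hs
  rw [Complex.betaIntegral_eq_Gamma_mul_div _ _ (by simpa) (by simpa)] at h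
  have hcongr : EqOn (fun τ : ℝ => (τ : ℂ) ^ ((a : ℂ) - 1) * ((s : ℂ) - τ) ^ ((b : ℂ) - 1))
      (fun τ => ((τ ^ (a - 1) * (s - τ) ^ (b - 1) : ℝ) : ℂ)) (uIcc 0 s) := by
    intro τ hτ
    rw [uIcc_of_le hs.le] at hτ
    push_cast [Complex.ofReal_cpow hτ.1, Complex.ofReal_cpow (sub_nonneg.2 hτ.2)]
    rfl
  rw [intervalIntegral.integral_congr hcongr, intervalIntegral.integral_ofReal] at h
  rw [← Complex.ofReal_inj, h]
  push_cast [Complex.ofReal_cpow hs.le, ← Complex.Gamma_ofReal]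
  rfl

lemma lintegral_Ioo_rpow_mul_sub_rpow {a b s : ℝ} (ha : 0 < a) (hb : 0 < b) (hs : 0 < s) :
    ∫⁻ τ in Ioo 0 s, ENNReal.ofReal (τ ^ (a - 1) * (s - τ) ^ (b - 1))
      = ENNReal.ofReal (s ^ (a + b - 1) * (Gamma a * Gamma b / Gamma (a + b))) := by
  have hint := ((intervalIntegrable_rpow_mul_sub_rpow ha hb hs).1).mono_set Ioo_subset_Ioc_self
  rw [← ofReal_integral_eq_lintegral_ofReal hint, ← integral_Ioc_eq_integral_Ioo,
    ← intervalIntegral.integral_of_le hs.le, integral_rpow_mul_sub_rpow ha hb hs]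
  exact (ae_restrict_iff' measurableSet_Ioo).2 (ae_of_all _ fun τ hτ =>
    mul_nonneg (rpow_nonneg hτ.1.le _) (rpow_nonneg (sub_nonneg.2 hτ.2.le) _))

end Beta

section Convolution

variable {n : ℕ} {α β : ℝ}

lemma lintegral_Phi_mul_Phi (hα : 0 < α) (hβ : 0 < β) {u v : ℝ} (hu : 0 < u) (hv : 0 < v)
    (x : EuclideanSpace ℝ (Fin n)) :
    ∫⁻ ξ, ENNReal.ofReal (Phi n α (x - ξ) u * Phi n β ξ v)
      = ENNReal.ofReal (u ^ (α - 1) / Gamma α * (v ^ (β - 1) / Gamma β)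
          * heatKernel n x (u + v)) := by
  have hΓα := Gamma_pos_of_pos hα
  have hΓβ := Gamma_pos_of_pos hβ
  have hc : 0 ≤ u ^ (α - 1) / Gamma α * (v ^ (β - 1) / Gamma β) := by positivity
  simp_rw [Phi_of_pos hu, Phi_of_pos hv, mul_mul_mul_comm, ENNReal.ofReal_mul hc]
  rw [lintegral_const_mul' _ _ ENNReal.ofReal_ne_top,
    ← ofReal_integral_eq_lintegral_ofReal (integrable_heatKernel_mul_heatKernel hu hv x)
      (ae_of_all _ fun ξ => (mul_pos (heatKernel_pos hu _) (heatKernel_pos hv _)).le),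
    integral_heatKernel_mul_heatKernel hu hv]

lemma lintegral_Iio_lintegral_Phi_mul_Phi (hα : 0 < α) (hβ : 0 < β) {s : ℝ} (hs : 0 < s)
    (x : EuclideanSpace ℝ (Fin n)) :
    ∫⁻ τ in Iio s, ∫⁻ ξ, ENNReal.ofReal (Phi n α (x - ξ) (s - τ) * Phi n β ξ τ)
      = ENNReal.ofReal (Phi n (α + β) x s) := by
  have hΓα := Gamma_pos_of_pos hα
  have hΓβ := Gamma_pos_of_pos hβ
  set c := heatKernel n x s / (Gamma α * Gamma β) with hc_def
  have hc : 0 ≤ c := div_nonneg (heatKernel_pos hs x).le (by positivity)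
  have hinner : EqOn (fun τ => ∫⁻ ξ, ENNReal.ofReal (Phi n α (x - ξ) (s - τ) * Phi n β ξ τ))
      ((Ioi 0).indicator fun τ => ENNReal.ofReal c
        * ENNReal.ofReal (τ ^ (β - 1) * (s - τ) ^ (α - 1))) (Iio s) := by
    intro τ hτs
    dsimp only
    rcases le_or_gt τ 0 with hτ | hτ
    · rw [indicator_of_notMem (notMem_Ioi.2 hτ)]
      simp [Phi_of_nonpos hτ]
    · rw [indicator_of_mem (mem_Ioi.2 hτ), lintegral_Phi_mul_Phi hα hβ (sub_pos.2 hτs) hτ,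
        sub_add_cancel, ← ENNReal.ofReal_mul hc]
      congr 1
      ring
  rw [setLIntegral_congr_fun measurableSet_Iio hinner, lintegral_indicator measurableSet_Ioi,
    Measure.restrict_restrict measurableSet_Ioi, Ioi_inter_Iio,
    lintegral_const_mul' _ _ ENNReal.ofReal_ne_top, lintegral_Ioo_rpow_mul_sub_rpow hβ hα hs,
    ← ENNReal.ofReal_mul hc, Phi_of_pos hs, add_comm β α, hc_def]
  congr 1
  field_simp

lemma J_eq_zero_of_forall_lt {f : EuclideanSpace ℝ (Fin n) → ℝ → ℝ} {t : ℝ}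
    (hf : ∀ ξ τ, τ < t → f ξ τ = 0) (x : EuclideanSpace ℝ (Fin n)) : J n α f x t = 0 := by
  refine (setLIntegral_congr_fun measurableSet_Iio fun τ hτ => ?_).trans lintegral_zero
  simp [hf _ τ hτ]

lemma J_le_of_le_Phi (hα : 0 < α) (hβ : 0 < β) {f : EuclideanSpace ℝ (Fin n) → ℝ → ℝ}
    {A T : ℝ} (hA : 0 ≤ A) (hf : ∀ ξ τ, f ξ τ ≤ A * Phi n β ξ (τ + T)) {t : ℝ} (ht : 0 < t + T)
    (x : EuclideanSpace ℝ (Fin n)) :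
    J n α f x t ≤ ENNReal.ofReal (A * Phi n (α + β) x (t + T)) := by
  set F := fun σ => ∫⁻ ξ, ENNReal.ofReal (Phi n α (x - ξ) (t + T - σ) * Phi n β ξ σ)
  have hshift : ∫⁻ τ in Iio t, F (τ + T) = ∫⁻ σ in Iio (t + T), F σ := by
    have h := (measurePreserving_add_right volume T).setLIntegral_comp_preimage_emb
      (measurableEmbedding_addRight T) F (Iio (t + T))
    rwa [preimage_add_const_Iio, add_sub_cancel_right] at h
  calc J n α f x t ≤ ∫⁻ τ in Iio t, ENNReal.ofReal A * F (τ + T) := by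
        refine setLIntegral_mono' measurableSet_Iio fun τ _ => ?_
        rw [← lintegral_const_mul' _ _ ENNReal.ofReal_ne_top]
        refine lintegral_mono fun ξ => ?_
        rw [← ENNReal.ofReal_mul hA, add_sub_add_right_eq_sub]
        exact ENNReal.ofReal_le_ofReal <|
          (mul_le_mul_of_nonneg_left (hf ξ τ) (Phi_nonneg hα (x - ξ) (t - τ))).trans_eq (by ring)
    _ = ENNReal.ofReal (A * Phi n (α + β) x (t + T)) := by
        rw [lintegral_const_mul' _ _ ENNReal.ofReal_ne_top, hshift,
          lintegral_Iio_lintegral_Phi_mul_Phi hα hβ ht, ENNReal.ofReal_mul hA]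

end Convolution

section Lp

lemma rpow_le_rpow_add_rpow {a b s : ℝ} (ha : 0 < a) (has : a ≤ s) (hsb : s ≤ b) (r : ℝ) :
    s ^ r ≤ a ^ r + b ^ r := by
  rcases le_total r 0 with hr | hr
  · linarith [rpow_le_rpow_of_nonpos ha has hr, rpow_nonneg (ha.le.trans (has.trans hsb)) r]
  · linarith [rpow_le_rpow (ha.le.trans has) hsb hr, rpow_nonneg ha.le r]

lemma Phi_le_of_mem_Icc {n : ℕ} {α a b s : ℝ} (hα : 0 < α) (ha : 0 < a) (has : a ≤ s)
    (hsb : s ≤ b) (x : EuclideanSpace ℝ (Fin n)) :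
    Phi n α x s ≤ (a ^ (α - 1) + b ^ (α - 1)) / Gamma α * (4 * π * a) ^ (-(n : ℝ) / 2)
      * rexp (-(1 / (4 * b)) * ‖x‖ ^ 2) := by
  have hs : 0 < s := ha.trans_le has
  have hb : 0 < b := hs.trans_le hsb
  have := Gamma_pos_of_pos hα
  have hcoeff : s ^ (α - 1) / Gamma α ≤ (a ^ (α - 1) + b ^ (α - 1)) / Gamma α := by
    gcongr
    exact rpow_le_rpow_add_rpow ha has hsb _
  have hpow : (4 * π * s) ^ (-(n : ℝ) / 2) ≤ (4 * π * a) ^ (-(n : ℝ) / 2) :=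
    rpow_le_rpow_of_nonpos (by positivity) (by gcongr)
      (div_nonpos_of_nonpos_of_nonneg (neg_nonpos.2 n.cast_nonneg) zero_le_two)
  have hexp : rexp (-‖x‖ ^ 2 / (4 * s)) ≤ rexp (-(1 / (4 * b)) * ‖x‖ ^ 2) := by
    rw [exp_le_exp, neg_mul, one_div_mul_eq_div, neg_div, neg_le_neg_iff]
    gcongr
  rw [Phi_of_pos hs, heatKernel, ← mul_assoc]
  exact mul_le_mul (mul_le_mul hcoeff hpow (by positivity) (by positivity)) hexp
    (by positivity) (by positivity)

lemma memLp_indicator_univ_prod {α β E : Type*} [MeasurableSpace α] [MeasurableSpace β]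
    [NormedAddCommGroup E] {μ : Measure α} {ν : Measure β} [SFinite μ] [SFinite ν]
    {p : ℝ≥0∞} {g : α → E} (hg : MemLp g p μ) {s : Set β} (hs : MeasurableSet s)
    (hνs : ν s ≠ ∞) :
    MemLp ((univ ×ˢ s).indicator fun q => g q.1) p (μ.prod ν) := by
  have := isFiniteMeasure_restrict.2 hνs
  rw [memLp_indicator_iff_restrict (MeasurableSet.univ.prod hs), ← Measure.prod_restrict,
    Measure.restrict_univ]
  exact hg.comp_fst _

lemma memXp_of_forall_norm_le {n : ℕ} {p : ℝ≥0∞} {f : EuclideanSpace ℝ (Fin n) → ℝ → ℝ}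
    (hf : Measurable (Function.uncurry f))
    (hbound : ∀ T, ∃ g : EuclideanSpace ℝ (Fin n) × ℝ → ℝ,
      MemLp g p ∧ ∀ x t, t < T → ‖f x t‖ ≤ ‖g (x, t)‖) :
    MemXp n p f := by
  refine ⟨hf, fun T => ?_⟩
  obtain ⟨g, hg, hfg⟩ := hbound T
  refine (eLpNorm_mono_ae ?_).trans_lt
    ((eLpNorm_mono_measure g Measure.restrict_le_self).trans_lt hg.2)
  exact (ae_restrict_iff' (measurableSet_lt measurable_snd measurable_const)).2
    (ae_of_all _ fun q hq => hfg q.1 q.2 hq)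

end Lp

section Solution

variable {n : ℕ} {β A T : ℝ}

/-- The exponent relation `(λ - 1) β = (λ - 1)(n + 2)/2 - λ α` balances the powers of `t`, the
normalisation of `A` balances the constants, and what is left of `(A Φ_{α+β})^λ / (A Φ_β)` is
`exp (-(λ - 1) ‖x‖² / (4 t)) ≤ 1`. -/
lemma rpow_const_mul_Phi_le {α lam : ℝ} (hα : 0 < α) (hβ : 0 < β) (hlam : 1 < lam)
    (hA : 0 < A)
    (hA_pow : A ^ (lam - 1) = (4 * π) ^ ((lam - 1) * n / 2) * Gamma (α + β) ^ lam / Gamma β)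
    (hβ_eq : (lam - 1) * β = (lam - 1) * (n + 2) / 2 - lam * α) {t : ℝ} (ht : 0 < t)
    (x : EuclideanSpace ℝ (Fin n)) :
    (A * Phi n (α + β) x t) ^ lam ≤ A * Phi n β x t := by
  have hαβ : 0 < α + β := add_pos hα hβ
  have hlogA : (lam - 1) * log A
      = (lam - 1) * n / 2 * log (4 * π) + lam * log (Gamma (α + β)) - log (Gamma β) := by
    have := Gamma_pos_of_pos hαβ
    have := Gamma_pos_of_pos hβ
    rw [← log_rpow hA, hA_pow, log_div (by positivity) (by positivity),
      log_mul (by positivity) (by positivity), log_rpow (by positivity), log_rpow (by positivity)]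
  rw [rpow_def_of_pos (mul_pos hA (Phi_pos hαβ ht x)),
    ← exp_log (mul_pos hA (Phi_pos hβ ht x)), exp_le_exp,
    log_mul hA.ne' (Phi_pos hαβ ht x).ne', log_mul hA.ne' (Phi_pos hβ ht x).ne',
    log_Phi hαβ ht, log_Phi hβ ht]
  have hgauss : 0 ≤ (lam - 1) * (‖x‖ ^ 2 / (4 * t)) := by
    have : 0 < lam - 1 := by linarith
    positivity
  linear_combination hlogA + log t * hβ_eq + hgauss

noncomputable def truncatedShiftedPhi (n : ℕ) (β A T : ℝ) (x : EuclideanSpace ℝ (Fin n))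
    (t : ℝ) : ℝ :=
  if 0 ≤ t then A * Phi n β x (t + T) else 0

lemma truncatedShiftedPhi_of_neg {t : ℝ} (ht : t < 0) (x : EuclideanSpace ℝ (Fin n)) :
    truncatedShiftedPhi n β A T x t = 0 :=
  if_neg ht.not_ge

lemma truncatedShiftedPhi_le (hβ : 0 < β) (hA : 0 ≤ A) (x : EuclideanSpace ℝ (Fin n)) (t : ℝ) :
    truncatedShiftedPhi n β A T x t ≤ A * Phi n β x (t + T) := by
  unfold truncatedShiftedPhi
  split_ifs
  exacts [le_rfl, mul_nonneg hA (Phi_nonneg hβ x _)]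

lemma measurable_truncatedShiftedPhi :
    Measurable (Function.uncurry (truncatedShiftedPhi n β A T)) :=
  Measurable.ite (measurableSet_le measurable_const measurable_snd)
    (measurable_const.mul ((measurable_Phi β).comp
      (measurable_fst.prodMk (measurable_snd.add_const T)))) measurable_const

lemma memXp_truncatedShiftedPhi (hβ : 0 < β) (hT : 0 < T) {p : ℝ≥0∞} (hp0 : p ≠ 0)
    (hp : p ≠ ∞) : MemXp n p (truncatedShiftedPhi n β A T) := by
  refine memXp_of_forall_norm_le measurable_truncatedShiftedPhi fun T' => ?_
  set M := max T' 0
  set K := (T ^ (β - 1) + (M + T) ^ (β - 1)) / Gamma β * (4 * π * T) ^ (-(n : ℝ) / 2)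
  refine ⟨(univ ×ˢ Icc 0 M).indicator fun q => ‖A‖ * K * rexp (-(1 / (4 * (M + T))) * ‖q.1‖ ^ 2),
    memLp_indicator_univ_prod ((memLp_exp_neg_mul_sq_norm (by positivity) hp0 hp).const_mul _)
      measurableSet_Icc (by simp [Real.volume_Icc]), fun x t ht => ?_⟩
  by_cases ht0 : 0 ≤ t
  · have hK : 0 ≤ K := by
      have := Gamma_pos_of_pos hβ
      have : 0 < M + T := by positivity
      positivity
    rw [truncatedShiftedPhi, if_pos ht0,
      indicator_of_mem (show (x, t) ∈ univ ×ˢ Icc 0 M from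
        ⟨mem_univ x, ht0, ht.le.trans (le_max_left _ _)⟩), norm_mul,
      Real.norm_of_nonneg (Phi_nonneg hβ x _),
      Real.norm_of_nonneg (mul_nonneg (mul_nonneg (norm_nonneg A) hK) (exp_nonneg _)), mul_assoc]
    gcongr
    exact Phi_le_of_mem_Icc hβ hT (by linarith) (by linarith [le_max_left T' 0]) x
  · rw [truncatedShiftedPhi, if_neg ht0, norm_zero]
    exact norm_nonneg _

lemma J_rpow_le_truncatedShiftedPhi {α lam : ℝ} (hα : 0 < α) (hβ : 0 < β) (hlam : 1 < lam)
    (hA : 0 < A)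
    (hA_pow : A ^ (lam - 1) = (4 * π) ^ ((lam - 1) * n / 2) * Gamma (α + β) ^ lam / Gamma β)
    (hβ_eq : (lam - 1) * β = (lam - 1) * (n + 2) / 2 - lam * α) (hT : 0 < T)
    (x : EuclideanSpace ℝ (Fin n)) (t : ℝ) :
    J n α (truncatedShiftedPhi n β A T) x t ^ lam
      ≤ ENNReal.ofReal (truncatedShiftedPhi n β A T x t) := by
  rcases lt_or_ge t 0 with ht | ht
  · rw [J_eq_zero_of_forall_lt (fun ξ τ hτ => truncatedShiftedPhi_of_neg (hτ.trans ht) ξ),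
      ENNReal.zero_rpow_of_pos (by linarith)]
    exact zero_le
  have htT : 0 < t + T := by linarith
  calc J n α (truncatedShiftedPhi n β A T) x t ^ lam
      ≤ ENNReal.ofReal (A * Phi n (α + β) x (t + T)) ^ lam :=
        ENNReal.rpow_le_rpow (J_le_of_le_Phi hα hβ hA.le (truncatedShiftedPhi_le hβ hA.le) htT x)
          (by linarith)
    _ = ENNReal.ofReal ((A * Phi n (α + β) x (t + T)) ^ lam) :=
        ENNReal.ofReal_rpow_of_nonneg (mul_nonneg hA.le (Phi_nonneg (by linarith) x _))
          (by linarith)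
    _ ≤ ENNReal.ofReal (A * Phi n β x (t + T)) :=
        ENNReal.ofReal_le_ofReal (rpow_const_mul_Phi_le hα hβ hlam hA hA_pow hβ_eq htT x)
    _ = ENNReal.ofReal (truncatedShiftedPhi n β A T x t) := by
        rw [truncatedShiftedPhi, if_pos ht]

lemma not_ae_truncatedShiftedPhi_eq_zero (hβ : 0 < β) (hA : A ≠ 0) (hT : 0 < T) :
    ¬ ∀ᵐ q : EuclideanSpace ℝ (Fin n) × ℝ, truncatedShiftedPhi n β A T q.1 q.2 = 0 := by
  intro hae
  have hopen : IsOpen {q : EuclideanSpace ℝ (Fin n) × ℝ | 0 < q.2} :=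
    isOpen_lt continuous_const continuous_snd
  refine (hopen.measure_pos volume ⟨(0, 1), (one_pos : (0 : ℝ) < 1)⟩).ne'
    (measure_mono_null (fun q hq => ?_) (ae_iff.1 hae))
  have hq : 0 < q.2 := hq
  rw [mem_ofPred_eq, truncatedShiftedPhi, if_pos hq.le]
  exact mul_ne_zero hA (Phi_pos hβ (by linarith) _).ne'

end Solution

theorem super_problem_region_DE_solution_general (n : ℕ) (α lam T : ℝ)
    (hlam : 1 < lam) (hα0 : 0 < α) (hα1 : α < ((n : ℝ) + 2) / 2 * (1 - 1 / lam))
    (hT : 0 < T) :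
    0 < ((n : ℝ) + 2) / 2 - lam * α / (lam - 1) ∧
    ∀ β A : ℝ, β = ((n : ℝ) + 2) / 2 - lam * α / (lam - 1) →
      A = ((4 * Real.pi) ^ ((lam - 1) * (n : ℝ) / 2) * (Real.Gamma (α + β)) ^ lam /
        Real.Gamma β) ^ (1 / (lam - 1)) →
      ∀ f : EuclideanSpace ℝ (Fin n) → ℝ → ℝ,
        (f = fun x t => if 0 ≤ t then A * Phi n β x (t + T) else 0) →
        (∀ p : ℝ, 1 ≤ p → MemXp n (ENNReal.ofReal p) f) ∧
        (∀ (x : EuclideanSpace ℝ (Fin n)) (t : ℝ),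
          (J n α f x t) ^ lam ≤ ENNReal.ofReal (f x t)) ∧
        (∀ (x : EuclideanSpace ℝ (Fin n)) (t : ℝ), t < 0 → f x t = 0) ∧
        ¬ (∀ᵐ q : EuclideanSpace ℝ (Fin n) × ℝ, f q.1 q.2 = 0) := by
  have hlam1 : 0 < lam - 1 := by linarith
  have hβ_pos : 0 < ((n : ℝ) + 2) / 2 - lam * α / (lam - 1) := by
    rw [sub_pos, div_lt_iff₀ hlam1]
    calc lam * α < lam * (((n : ℝ) + 2) / 2 * (1 - 1 / lam)) := by gcongr
      _ = ((n : ℝ) + 2) / 2 * (lam - 1) := by field_simp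
  refine ⟨hβ_pos, fun β A hβ hA f hf => ?_⟩
  rw [← hβ] at hβ_pos
  have hβ_eq : (lam - 1) * β = (lam - 1) * (n + 2) / 2 - lam * α := by
    rw [hβ]
    field_simp
  have := Gamma_pos_of_pos hβ_pos
  have := Gamma_pos_of_pos (add_pos hα0 hβ_pos)
  have hA_pos : 0 < A := by rw [hA]; positivity
  have hA_pow : A ^ (lam - 1)
      = (4 * π) ^ ((lam - 1) * n / 2) * Gamma (α + β) ^ lam / Gamma β := by
    rw [hA, ← rpow_mul (by positivity), one_div_mul_cancel hlam1.ne', rpow_one]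
  change f = truncatedShiftedPhi n β A T at hf
  subst hf
  exact ⟨fun p hp => memXp_truncatedShiftedPhi hβ_pos hT
      (ENNReal.ofReal_pos.2 (by linarith)).ne' ENNReal.ofReal_ne_top,
    J_rpow_le_truncatedShiftedPhi hα0 hβ_pos hlam hA_pos hA_pow hβ_eq hT,
    fun x t ht => truncatedShiftedPhi_of_neg ht x,
    not_ae_truncatedShiftedPhi_eq_zero hβ_pos hA_pos.ne' hT⟩

theorem super_problem_region_DE_solution (n : ℕ) (hn : 1 ≤ n) (α lam T : ℝ)
    (hlam : 1 < lam) (hα0 : 0 < α) (hα1 : α < ((n : ℝ) + 2) / 2 * (1 - 1 / lam))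
    (hT : 0 < T) :
    0 < ((n : ℝ) + 2) / 2 - lam * α / (lam - 1) ∧
    ∀ β A : ℝ, β = ((n : ℝ) + 2) / 2 - lam * α / (lam - 1) →
      A = ((4 * Real.pi) ^ ((lam - 1) * (n : ℝ) / 2) * (Real.Gamma (α + β)) ^ lam /
        Real.Gamma β) ^ (1 / (lam - 1)) →
      ∀ f : EuclideanSpace ℝ (Fin n) → ℝ → ℝ,
        (f = fun x t => if 0 ≤ t then A * Phi n β x (t + T) else 0) →
        (∀ p : ℝ, 1 ≤ p → MemXp n (ENNReal.ofReal p) f) ∧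
        (∀ (x : EuclideanSpace ℝ (Fin n)) (t : ℝ),
          (J n α f x t) ^ lam ≤ ENNReal.ofReal (f x t)) ∧
        (∀ (x : EuclideanSpace ℝ (Fin n)) (t : ℝ), t < 0 → f x t = 0) ∧
        ¬ (∀ᵐ q : EuclideanSpace ℝ (Fin n) × ℝ, f q.1 q.2 = 0) :=
  super_problem_region_DE_solution_general n α lam T hlam hα0 hα1 hT
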